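/- For α > 0 and n + α > 1, the function Γ(ξ) = ρ(ξ)^{1-n-α} satisfies 𝓛Γ = 0 at every point ξ = (x,y) with x ≠ 0, where 𝓛 is the Grushin operator and ρ the gauge function. -/

import Mathlib

open Real

/-- The Grushin gauge function. -/
noncomputable def rho (n : ℕ) (α : ℝ) (x : EuclideanSpace ℝ (Fin n)) (y : ℝ) : ℝ :=
  (‖x‖ ^ (2 * (α + 1)) + (α + 1) ^ 2 * y ^ 2) ^ (1 / (2 * (α + 1)))

/-- The Euclidean Laplacian in x. -/
noncomputable def lapx (n : ℕ) (f : EuclideanSpace ℝ (Fin n) → ℝ)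
    (x : EuclideanSpace ℝ (Fin n)) : ℝ :=
  ∑ i : Fin n, iteratedDeriv 2 (fun t : ℝ => f (x + t • EuclideanSpace.single i 1)) 0

/-- The fundamental solution Γ = ρ^{1-n-α}. -/
noncomputable def Gam (n : ℕ) (α : ℝ) (x : EuclideanSpace ℝ (Fin n)) (y : ℝ) : ℝ :=
  (rho n α x y) ^ (1 - (n : ℝ) - α)

/-!
Γ depends on `x` only through `s = ‖x‖²`, and along the line `x + t • eᵢ` one has
`s = ‖x‖² + 2 xᵢ t + t²`, so the chain rule turns `Δₓ` into `4 s ∂ₛ² + 2 n ∂ₛ`.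
Writing `Γ = W ^ E` with `W = s ^ (α + 1) + (α + 1)² y² = ρ ^ (2 (α + 1))`, the Grushin
operator applied to `Γ` collapses to
`2 (α + 1) s ^ α W ^ (E - 1) · E (2 (α + 1) E - (1 - n - α))`,
and `E = (1 - n - α) / (2 (α + 1))` is exactly the nonzero root of the last factor.
-/

open Filter Topology

/-- `f'` is a derivative of `f` on a whole neighbourhood of `t`, so that second derivatives
compose and determine `deriv (deriv f) t`. -/
def HasSecondDerivAt (f f' : ℝ → ℝ) (f'' t : ℝ) : Prop :=
  (∀ᶠ τ in 𝓝 t, HasDerivAt f (f' τ) τ) ∧ HasDerivAt f' f'' t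

namespace HasSecondDerivAt

variable {f g f' g' : ℝ → ℝ} {f'' g'' t u : ℝ}

theorem deriv_deriv (h : HasSecondDerivAt f f' f'' t) : deriv (deriv f) t = f'' := by
  have hderiv : deriv f =ᶠ[𝓝 t] f' := h.1.mono fun _ hτ => hτ.deriv
  rw [hderiv.deriv_eq, h.2.deriv]

theorem iteratedDeriv_two (h : HasSecondDerivAt f f' f'' t) : iteratedDeriv 2 f t = f'' := by
  rw [iteratedDeriv_succ, iteratedDeriv_one, h.deriv_deriv]

theorem add_const (h : HasSecondDerivAt f f' f'' t) (c : ℝ) :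
    HasSecondDerivAt (fun τ => f τ + c) f' f'' t :=
  ⟨h.1.mono fun _ hτ => hτ.add_const c, h.2⟩

theorem comp_of_eq (hg : HasSecondDerivAt g g' g'' u) (hf : HasSecondDerivAt f f' f'' t)
    (hu : u = f t) :
    HasSecondDerivAt (fun τ => g (f τ)) (fun τ => g' (f τ) * f' τ)
      (g'' * f' t ^ 2 + g' u * f'') t := by
  subst hu
  have hf_cont : ContinuousAt f t := hf.1.self_of_nhds.continuousAt
  refine ⟨?_, ?_⟩
  · filter_upwards [hf.1, hf_cont.eventually hg.1] with τ hfτ hgτ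
    exact hgτ.comp τ hfτ
  · exact ((hg.2.comp t hf.1.self_of_nhds).mul hf.2).congr_deriv
      (by rw [Function.comp_apply]; ring)

end HasSecondDerivAt

theorem hasSecondDerivAt_quadratic (a b c t : ℝ) :
    HasSecondDerivAt (fun τ => a + b * τ + c * τ ^ 2) (fun τ => b + 2 * c * τ) (2 * c) t := by
  refine ⟨Eventually.of_forall fun τ => ?_, ?_⟩
  · exact (((hasDerivAt_id' τ).const_mul b).const_add a |>.add
      ((hasDerivAt_pow 2 τ).const_mul c)).congr_deriv (by ring)
  · exact (((hasDerivAt_id' t).const_mul (2 * c)).const_add b).congr_deriv (mul_one _)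

theorem hasSecondDerivAt_rpow_const {w : ℝ} (hw : 0 < w) (p : ℝ) :
    HasSecondDerivAt (fun v => v ^ p) (fun v => p * v ^ (p - 1)) (p * (p - 1) * w ^ (p - 2)) w := by
  refine ⟨?_, ?_⟩
  · filter_upwards [lt_mem_nhds hw] with v hv
    exact Real.hasDerivAt_rpow_const (Or.inl hv.ne')
  · refine ((Real.hasDerivAt_rpow_const (p := p - 1) (Or.inl hw.ne')).const_mul p).congr_deriv ?_
    rw [sub_sub, one_add_one_eq_two, mul_assoc]

theorem rpow_two_mul {a : ℝ} (ha : 0 ≤ a) (b : ℝ) : a ^ (2 * b) = (a ^ 2) ^ b := by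
  rw [Real.rpow_mul ha, Real.rpow_two]

/-- `ρ ^ (2 (α + 1))`. -/
noncomputable def rhoPow {n : ℕ} (α : ℝ) (x : EuclideanSpace ℝ (Fin n)) (y : ℝ) : ℝ :=
  (‖x‖ ^ 2) ^ (α + 1) + (α + 1) ^ 2 * y ^ 2

/-- At `α = -1` division by zero makes this `0`, which still solves
`E * (2 * (α + 1) * E - (1 - n - α)) = 0`. -/
noncomputable def gamExponent (n : ℕ) (α : ℝ) : ℝ := (1 - n - α) / (2 * (α + 1))

theorem Gam_eq (n : ℕ) (α : ℝ) (x : EuclideanSpace ℝ (Fin n)) (y : ℝ) :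
    Gam n α x y = rhoPow α x y ^ gamExponent n α := by
  rw [Gam, rho, rpow_two_mul (norm_nonneg x), ← Real.rpow_mul (by positivity), rhoPow,
    gamExponent]
  congr 1
  ring

theorem norm_add_smul_single_sq {n : ℕ} (x : EuclideanSpace ℝ (Fin n)) (i : Fin n) (t : ℝ) :
    ‖x + t • EuclideanSpace.single i (1 : ℝ)‖ ^ 2 = ‖x‖ ^ 2 + 2 * x i * t + t ^ 2 := by
  rw [norm_add_sq_real, real_inner_smul_right, EuclideanSpace.inner_single_right, norm_smul,
    PiLp.norm_single]
  simp only [conj_trivial, one_mul, norm_one, mul_one, Real.norm_eq_abs, sq_abs]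
  ring

section Derivatives

variable {n : ℕ} {α : ℝ} {x : EuclideanSpace ℝ (Fin n)} (y E : ℝ)

theorem iteratedDeriv_two_rpow_rhoPow_line (hx : x ≠ 0) (i : Fin n) :
    iteratedDeriv 2 (fun t : ℝ => rhoPow α (x + t • EuclideanSpace.single i 1) y ^ E) 0
      = (E * (E - 1) * rhoPow α x y ^ (E - 2) * ((α + 1) * (‖x‖ ^ 2) ^ α) ^ 2
          + E * rhoPow α x y ^ (E - 1) * (α + 1) * α * (‖x‖ ^ 2) ^ (α - 1)) * (2 * x i) ^ 2
        + 2 * (E * rhoPow α x y ^ (E - 1) * (α + 1) * (‖x‖ ^ 2) ^ α) := by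
  have hs : 0 < ‖x‖ ^ 2 := by positivity
  have hW : 0 < rhoPow α x y := by unfold rhoPow; positivity
  have hq : HasSecondDerivAt (fun t => ‖x‖ ^ 2 + 2 * x i * t + t ^ 2) (fun t => 2 * x i + 2 * t)
      2 0 := by
    simpa only [one_mul, mul_one] using hasSecondDerivAt_quadratic (‖x‖ ^ 2) (2 * x i) 1 0
  have hline := (hasSecondDerivAt_rpow_const hW E).comp_of_eq
    (((hasSecondDerivAt_rpow_const hs (α + 1)).add_const ((α + 1) ^ 2 * y ^ 2)).comp_of_eq hq
      (by simp)) (by simp [rhoPow])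
  simp_rw [rhoPow, norm_add_smul_single_sq]
  rw [hline.iteratedDeriv_two]
  simp only [rhoPow, mul_zero, add_zero, zero_pow two_ne_zero, add_sub_cancel_right,
    show α + 1 - 2 = α - 1 by ring]
  ring

theorem lapx_rpow_rhoPow (hx : x ≠ 0) :
    lapx n (fun x' => rhoPow α x' y ^ E) x
      = 4 * ‖x‖ ^ 2
          * (E * (E - 1) * rhoPow α x y ^ (E - 2) * ((α + 1) * (‖x‖ ^ 2) ^ α) ^ 2
          + E * rhoPow α x y ^ (E - 1) * (α + 1) * α * (‖x‖ ^ 2) ^ (α - 1))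
        + 2 * n * (E * rhoPow α x y ^ (E - 1) * (α + 1) * (‖x‖ ^ 2) ^ α) := by
  simp only [lapx, iteratedDeriv_two_rpow_rhoPow_line y E hx, Finset.sum_add_distrib,
    ← Finset.mul_sum, mul_pow, ← EuclideanSpace.real_norm_sq_eq, Finset.sum_const,
    Finset.card_univ, Fintype.card_fin, nsmul_eq_mul]
  ring

theorem deriv_deriv_rpow_rhoPow (hx : x ≠ 0) :
    deriv (fun y' => deriv (fun y'' => rhoPow α x y'' ^ E) y') y
      = E * (E - 1) * rhoPow α x y ^ (E - 2) * (2 * (α + 1) ^ 2 * y) ^ 2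
        + E * rhoPow α x y ^ (E - 1) * (2 * (α + 1) ^ 2) := by
  have hW : 0 < rhoPow α x y := by unfold rhoPow; positivity
  have hq : HasSecondDerivAt (fun t => (‖x‖ ^ 2) ^ (α + 1) + (α + 1) ^ 2 * t ^ 2)
      (fun t => 2 * (α + 1) ^ 2 * t) (2 * (α + 1) ^ 2) y := by
    simpa only [zero_mul, add_zero, zero_add] using
      hasSecondDerivAt_quadratic ((‖x‖ ^ 2) ^ (α + 1)) 0 ((α + 1) ^ 2) y
  exact ((hasSecondDerivAt_rpow_const hW E).comp_of_eq hq rfl).deriv_deriv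

end Derivatives

theorem div_mul_mul_div_sub_self {K : Type*} [Field K] (a b : K) :
    a / b * (b * (a / b) - a) = 0 := by
  rcases eq_or_ne b 0 with rfl | hb
  · simp
  · rw [mul_div_cancel₀ a hb, sub_self, mul_zero]

theorem radial_grushin_rpow_eq_zero {n α s y W E : ℝ} (hs : 0 < s)
    (hW : W = s ^ (α + 1) + (α + 1) ^ 2 * y ^ 2)
    (hE : E * (2 * (α + 1) * E - (1 - n - α)) = 0) :
    4 * s * (E * (E - 1) * W ^ (E - 2) * ((α + 1) * s ^ α) ^ 2
          + E * W ^ (E - 1) * (α + 1) * α * s ^ (α - 1))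
        + 2 * n * (E * W ^ (E - 1) * (α + 1) * s ^ α)
        + s ^ α * (E * (E - 1) * W ^ (E - 2) * (2 * (α + 1) ^ 2 * y) ^ 2
          + E * W ^ (E - 1) * (2 * (α + 1) ^ 2)) = 0 := by
  have hW_pos : 0 < W := hW ▸ by positivity
  have hW_pow : W ^ (E - 2) = W ^ (E - 1) / W := by
    rw [eq_div_iff hW_pos.ne', ← rpow_add_one hW_pos.ne']; ring_nf
  have hs_pow : s ^ (α - 1) = s ^ α / s := by
    rw [eq_div_iff hs.ne', ← rpow_add_one hs.ne']; ring_nf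
  have hs_pow' : s ^ (α + 1) = s ^ α * s := rpow_add_one hs.ne' α
  calc _ = 2 * (α + 1) * s ^ α * W ^ (E - 1) * (E * (2 * (α + 1) * E - (1 - n - α))) := by
        rw [hW_pow, hs_pow]
        field_simp
        rw [hW, hs_pow']
        ring
    _ = 0 := by rw [hE, mul_zero]

theorem stmt_3_general (n : ℕ) (α : ℝ)
    (x : EuclideanSpace ℝ (Fin n)) (y : ℝ) (hx : x ≠ 0) :
    lapx n (fun x' => Gam n α x' y) x
        + ‖x‖ ^ (2 * α) * deriv (fun y' => deriv (fun y'' => Gam n α x y'') y') y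
      = 0 := by
  simp_rw [Gam_eq]
  rw [lapx_rpow_rhoPow y _ hx, deriv_deriv_rpow_rhoPow y _ hx, rpow_two_mul (norm_nonneg x)]
  exact radial_grushin_rpow_eq_zero (by positivity) rfl (div_mul_mul_div_sub_self _ _)

theorem stmt_3 (n : ℕ) (α : ℝ) (hα : 0 < α) (hn : 1 < (n : ℝ) + α)
    (x : EuclideanSpace ℝ (Fin n)) (y : ℝ) (hx : x ≠ 0) :
    lapx n (fun x' => Gam n α x' y) x
        + ‖x‖ ^ (2 * α) * deriv (fun y' => deriv (fun y'' => Gam n α x y'') y') y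
      = 0 :=
  stmt_3_general n α x y hx
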